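/- Let ω = ω_1 ω_2 ⋯ ω_ℓ be a concatenation of ℓ words each of length m ≥ k over a finite alphabet Σ, and let μ_i = fr_{ω_i}^k and μ = (1/ℓ) Σ_{i=1}^ℓ μ_i. Then for every φ ∈ Σ^k, |fr_ω^k(φ) − μ(φ)| ≤ (ℓ−1)(k−1)/(mℓ − k + 1). -/

import Mathlib

open Finset

def occCount {A : Type*} [DecidableEq A] (k : ℕ) (ω : List A) (φ : Fin k → A) : ℕ :=
  ((Finset.range (ω.length - k + 1)).filter
    (fun i => ∀ j : Fin k, ω[i + (j : ℕ)]? = some (φ j))).card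

noncomputable def freq {A : Type*} [DecidableEq A] (k : ℕ) (ω : List A) (φ : Fin k → A) : ℝ :=
  (occCount k ω φ : ℝ) / ((ω.length - k + 1 : ℕ) : ℝ)

def IsProbVec {A : Type*} [Fintype A] {k : ℕ} (η : (Fin k → A) → ℝ) : Prop :=
  (∀ φ, 0 ≤ η φ) ∧ ∑ φ : Fin k → A, η φ = 1

def ShiftInv {A : Type*} [Fintype A] (k : ℕ) (η : (Fin (k + 2) → A) → ℝ) : Prop :=
  ∀ ψ : Fin (k + 1) → A, ∑ a : A, η (Fin.cons a ψ) = ∑ a : A, η (Fin.snoc ψ a)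

def genFrom {A V : Type*} (E : V → V → A → Prop) (ω : List A) : Prop :=
  ∃ f : Fin (ω.length + 1) → V, ∀ i : Fin ω.length, E (f i.castSucc) (f i.succ) (ω.get i)

noncomputable def capacity {A : Type*} (T : Set (List A)) : ℝ :=
  Filter.atTop.limsup fun n : ℕ =>
    Real.logb 2 (Nat.card {ω : List A // ω ∈ T ∧ ω.length = n}) / n

def memGammaEps {A : Type*} [Fintype A] [DecidableEq A] {k : ℕ}
    (Γ : Set ((Fin k → A) → ℝ)) (ε : ℝ) (η : (Fin k → A) → ℝ) : Prop :=
  IsProbVec η ∧ ∃ δ, ε < δ ∧ ∀ μ : (Fin k → A) → ℝ, IsProbVec μ → μ ∉ Γ → δ ≤ ‖η - μ‖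

/-!
Every occurrence of `φ` inside a block `ω_i` is an occurrence in `ω`, and every other occurrence
in `ω` starts at one of the at most `k - 1` positions straddling one of the `ℓ - 1` junctions.
So, with `S = ∑ occ(ω_i)` and `N = occ(ω)`, we get `S ≤ N ≤ S + e` where `e = (ℓ - 1)(k - 1)`.
The blocks have `D = ℓ(m - k + 1)` windows in total and `ω` has `D + e`, so the claim reads
`|N / (D + e) - S / D| ≤ e / (D + e)`, which is elementary given `S ≤ D`.
-/

theorem List.length_flatten_of_forall_length_eq {α : Type*} {m : ℕ} {L : List (List α)}
    (h : ∀ w ∈ L, w.length = m) : L.flatten.length = L.length * m := by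
  rw [List.length_flatten, List.map_congr_left h, List.map_const', List.sum_replicate_nat]

section Occurrences

variable {A : Type*} {k : ℕ}

def OccursAt (ω : List A) (φ : Fin k → A) (p : ℕ) : Prop :=
  ∀ j : Fin k, ω[p + (j : ℕ)]? = some (φ j)

theorem OccursAt.add_le (hk : 1 ≤ k) {ω : List A} {φ : Fin k → A} {p : ℕ}
    (h : OccursAt ω φ p) : p + k ≤ ω.length := by
  have hlt : p + (k - 1) < ω.length := (List.getElem?_eq_some_iff.mp (h ⟨k - 1, by omega⟩)).1
  omega

theorem OccursAt.append_right {u : List A} {φ : Fin k → A} {p : ℕ} (h : OccursAt u φ p)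
    (v : List A) : OccursAt (u ++ v) φ p := fun j => by
  rw [List.getElem?_append_left (List.getElem?_eq_some_iff.mp (h j)).1, h j]

theorem OccursAt.of_append_right {u v : List A} {φ : Fin k → A} {p : ℕ}
    (hp : p + k ≤ u.length) (h : OccursAt (u ++ v) φ p) : OccursAt u φ p := fun j => by
  rw [← List.getElem?_append_left (l₂ := v) (by omega), h j]

theorem occursAt_append_length_add_iff (u v : List A) (φ : Fin k → A) (p : ℕ) :
    OccursAt (u ++ v) φ (u.length + p) ↔ OccursAt v φ p := by
  simp only [OccursAt, add_assoc, List.getElem?_append_right (Nat.le_add_right _ _),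
    Nat.add_sub_cancel_left]

variable [DecidableEq A]

instance (ω : List A) (φ : Fin k → A) : DecidablePred (OccursAt ω φ) :=
  fun p => inferInstanceAs (Decidable (∀ j : Fin k, ω[p + (j : ℕ)]? = some (φ j)))

theorem occCount_eq_count (hk : 1 ≤ k) {ω : List A} (φ : Fin k → A) {N : ℕ}
    (hN : ω.length < N + k) : occCount k ω φ = Nat.count (OccursAt ω φ) N := by
  rw [Nat.count_eq_card_filter_range, occCount]
  congr 1
  ext p
  simp only [mem_filter, mem_range]
  constructor <;> intro h <;> have := OccursAt.add_le hk h.2 <;> exact ⟨by omega, h.2⟩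

theorem occCount_append (hk : 1 ≤ k) (u v : List A) (φ : Fin k → A) :
    occCount k (u ++ v) φ = Nat.count (OccursAt (u ++ v) φ) u.length + occCount k v φ := by
  rw [occCount_eq_count hk φ (N := u.length + v.length) (by simp; omega), Nat.count_add,
    occCount_eq_count hk φ (N := v.length) (by omega)]
  simp only [occursAt_append_length_add_iff]

theorem occCount_add_occCount_le_occCount_append (hk : 1 ≤ k) (u v : List A) (φ : Fin k → A) :
    occCount k u φ + occCount k v φ ≤ occCount k (u ++ v) φ := by
  rw [occCount_append hk, occCount_eq_count hk φ (N := u.length) (by omega)]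
  gcongr 1
  exact Nat.count_mono_left fun p _ h => h.append_right v

theorem occCount_append_le (hk : 1 ≤ k) (u v : List A) (φ : Fin k → A) :
    occCount k (u ++ v) φ ≤ occCount k u φ + occCount k v φ + (k - 1) := by
  -- windows starting below `a` lie inside `u`; the other `u.length - a ≤ k - 1` cross into `v`
  set a := u.length + 1 - k
  have hu : u.length = a + (u.length - a) := by omega
  have hcross : Nat.count (OccursAt (u ++ v) φ) u.length ≤ occCount k u φ + (k - 1) := by
    rw [occCount_eq_count hk φ (N := a) (by omega), hu, Nat.count_add]
    refine add_le_add (Nat.count_mono_left fun p hp h => h.of_append_right (by omega)) ?_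
    exact le_trans (Nat.count_le _) (by omega)
  rw [occCount_append hk]
  omega

theorem sum_occCount_le_occCount_flatten (hk : 1 ≤ k) (φ : Fin k → A) :
    ∀ L : List (List A), (L.map (occCount k · φ)).sum ≤ occCount k L.flatten φ
  | [] => by simp
  | w :: L => by
    rw [List.map_cons, List.sum_cons, List.flatten_cons]
    exact (Nat.add_le_add_left (sum_occCount_le_occCount_flatten hk φ L) _).trans
      (occCount_add_occCount_le_occCount_append hk _ _ φ)

theorem occCount_flatten_le (hk : 1 ≤ k) (φ : Fin k → A) :
    ∀ L : List (List A),
      occCount k L.flatten φ ≤ (L.map (occCount k · φ)).sum + (L.length - 1) * (k - 1)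
  | [] => by simp [occCount_eq_count hk φ (ω := []) (N := 0) (by simpa)]
  | [w] => by simp
  | w :: w' :: L => by
    have ih := occCount_flatten_le hk φ (w' :: L)
    have hw := occCount_append_le hk w (w' :: L).flatten φ
    have hlen : (w :: w' :: L).length - 1 = (w' :: L).length - 1 + 1 := by simp
    rw [List.flatten_cons, List.map_cons, List.sum_cons, hlen, add_one_mul]
    omega

theorem occCount_le (ω : List A) (φ : Fin k → A) : occCount k ω φ ≤ ω.length - k + 1 :=
  (card_filter_le _ _).trans (card_range _).le

theorem sum_map_occCount_le {m : ℕ} {L : List (List A)} (hlen : ∀ w ∈ L, w.length = m)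
    (φ : Fin k → A) : (L.map (occCount k · φ)).sum ≤ L.length * (m - k + 1) := by
  refine (List.sum_le_card_nsmul _ (m - k + 1) ?_).trans_eq
    (by rw [List.length_map, smul_eq_mul])
  simp only [List.mem_map]
  rintro _ ⟨w, hw, rfl⟩
  simpa [hlen w hw] using occCount_le w φ

theorem freq_flatten_of_forall_length_eq {m : ℕ} (hkm : k ≤ m) {L : List (List A)}
    (hℓ : 1 ≤ L.length) (hlen : ∀ w ∈ L, w.length = m) (φ : Fin k → A) :
    freq k L.flatten φ = occCount k L.flatten φ /
      ((L.length : ℝ) * ((m : ℝ) - k + 1) + ((L.length : ℝ) - 1) * ((k : ℝ) - 1)) := by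
  have hkℓm : k ≤ L.length * m := hkm.trans (Nat.le_mul_of_pos_left m hℓ)
  rw [freq, List.length_flatten_of_forall_length_eq hlen]
  push_cast [Nat.cast_sub hkℓm]
  ring_nf

theorem mean_freq_of_forall_length_eq {m : ℕ} (hkm : k ≤ m) {L : List (List A)}
    (hlen : ∀ w ∈ L, w.length = m) (φ : Fin k → A) :
    1 / (L.length : ℝ) * ∑ i : Fin L.length, freq k (L.get i) φ =
      (L.map (occCount k · φ)).sum / ((L.length : ℝ) * ((m : ℝ) - k + 1)) := by
  simp only [freq, List.get_eq_getElem, hlen _ (List.getElem_mem _), ← Finset.sum_div]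
  rw [← Nat.cast_sum, Fin.sum_univ_fun_getElem L (occCount k · φ), one_div_mul_eq_div, div_div,
    Nat.cast_add, Nat.cast_sub hkm, Nat.cast_one, mul_comm]

end Occurrences

theorem abs_div_add_sub_div_le {a s D e : ℝ} (hD : 0 < D) (he : 0 ≤ e) (hs : 0 ≤ s)
    (hsa : s ≤ a) (has : a ≤ s + e) (hsD : s ≤ D) :
    |a / (D + e) - s / D| ≤ e / (D + e) := by
  have hDe : 0 < D + e := by linarith
  rw [abs_le]
  constructor
  · calc -(e / (D + e)) ≤ -(s / D * (e / (D + e))) := by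
          gcongr; exact mul_le_of_le_one_left (by positivity) ((div_le_one hD).mpr hsD)
      _ = s / (D + e) - s / D := by field_simp; ring
      _ ≤ a / (D + e) - s / D := by gcongr
  · calc a / (D + e) - s / D ≤ (s + e) / (D + e) - s / (D + e) := by
          gcongr; linarith
      _ = e / (D + e) := by ring

theorem stmt2_general {A : Type*} [DecidableEq A] (k m : ℕ)
    (hk : 1 ≤ k) (hkm : k ≤ m)
    (L : List (List A)) (hℓ : 1 ≤ L.length) (hlen : ∀ w ∈ L, w.length = m)
    (φ : Fin k → A) :
    |freq k L.flatten φ - (1 / (L.length : ℝ)) * ∑ i : Fin L.length, freq k (L.get i) φ| ≤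
      ((L.length : ℝ) - 1) * ((k : ℝ) - 1) / ((m : ℝ) * (L.length : ℝ) - (k : ℝ) + 1) := by
  set ℓ := L.length
  set S := (L.map (occCount k · φ)).sum
  have hlow : S ≤ occCount k L.flatten φ := sum_occCount_le_occCount_flatten hk φ L
  have hup : occCount k L.flatten φ ≤ S + (ℓ - 1) * (k - 1) := occCount_flatten_le hk φ L
  have hS : S ≤ ℓ * (m - k + 1) := sum_map_occCount_le hlen φ
  have hkm' : (k : ℝ) ≤ m := by exact_mod_cast hkm
  have hℓ' : (1 : ℝ) ≤ ℓ := by exact_mod_cast hℓ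
  have hk' : (1 : ℝ) ≤ k := by exact_mod_cast hk
  rw [freq_flatten_of_forall_length_eq hkm hℓ hlen, mean_freq_of_forall_length_eq hkm hlen,
    show (m : ℝ) * ℓ - k + 1 = ℓ * (m - k + 1) + (ℓ - 1) * (k - 1) by ring]
  refine abs_div_add_sub_div_le (by positivity) (by positivity) (by positivity)
    (by exact_mod_cast hlow) ?_ ?_
  · have := (Nat.cast_le (α := ℝ)).mpr hup
    rwa [Nat.cast_add, Nat.cast_mul, Nat.cast_sub hℓ, Nat.cast_sub hk, Nat.cast_one] at this
  · have := (Nat.cast_le (α := ℝ)).mpr hS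
    rwa [Nat.cast_mul, Nat.cast_add, Nat.cast_sub hkm, Nat.cast_one] at this

theorem stmt2 {A : Type*} [Fintype A] [DecidableEq A] (k m : ℕ)
    (hk : 1 ≤ k) (hkm : k ≤ m)
    (L : List (List A)) (hℓ : 1 ≤ L.length) (hlen : ∀ w ∈ L, w.length = m)
    (φ : Fin k → A) :
    |freq k L.flatten φ - (1 / (L.length : ℝ)) * ∑ i : Fin L.length, freq k (L.get i) φ| ≤
      ((L.length : ℝ) - 1) * ((k : ℝ) - 1) / ((m : ℝ) * (L.length : ℝ) - (k : ℝ) + 1) :=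
  stmt2_general k m hk hkm L hℓ hlen φ
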